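/- Fix p ∈ (0,1) and ε ∈ (0, 1/2). For each r ≥ 1 along a sequence with r → ∞, set a = r^{p−1}, and let x^{◦,a} ∈ ℝ^K have all coordinates positive and satisfy: (i) |Σ_{k∈K} k_i x^{◦,a}_k − ρ_i| ≤ r^{−1/2+ε}/|I| for all i ∈ I and all sufficiently large r; and (ii) χ_{k,k',i}(x^{◦,a}) → 0 as r → ∞ for every pair of edges (k,i), (k',i) ∈ M. Then L^(a)(x^{◦,a}) → L* as r → ∞, where L* is the optimal value of (LP). -/

import Mathlib

open Finset Filter

noncomputable def confC {I : Type*} [Fintype I] (k : I → ℕ) : ℝ :=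
  ∏ i, (Nat.factorial (k i) : ℝ)

/-- The Lyapunov function `L^(a)`. -/
noncomputable def Lfun {I : Type*} [Fintype I] [DecidableEq I]
    (Kbar : Finset (I → ℕ)) (a : ℝ) (x : (I → ℕ) → ℝ) : ℝ :=
  -(1 / Real.log a) *
    ∑ k ∈ Kbar.erase 0, x k * Real.log (x k * confC k / (Real.exp 1 * a))

def xeDef {I : Type*} [Fintype I]
    (a : ℝ) (x : (I → ℕ) → ℝ) (m : I → ℕ) : ℝ :=
  if m = 0 then a else x m

/-- `χ_{k,k',i}(x) = log(k'_i x_{k−e_i} x_{k'}) − log(k_i x_k x_{k'−e_i})`,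
with the convention `x_0 = a`. -/
noncomputable def chiDef {I : Type*} [Fintype I] [DecidableEq I]
    (a : ℝ) (x : (I → ℕ) → ℝ) (k k' : I → ℕ) (i : I) : ℝ :=
  Real.log ((k' i : ℝ) * xeDef a x (k - Pi.single i 1) * xeDef a x k')
    - Real.log ((k i : ℝ) * xeDef a x k * xeDef a x (k' - Pi.single i 1))

def isEdge {I : Type*} [Fintype I] [DecidableEq I]
    (Kbar : Finset (I → ℕ)) (k : I → ℕ) (i : I) : Prop :=
  k ∈ Kbar.erase 0 ∧ 1 ≤ k i ∧ k - Pi.single i 1 ∈ Kbar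

/-- The optimal value `L*` of the linear program (LP). -/
noncomputable def LPvalue {I : Type*} [Fintype I] [DecidableEq I]
    (Kbar : Finset (I → ℕ)) (ρ : I → ℝ) : ℝ :=
  sInf {v : ℝ | ∃ x : (I → ℕ) → ℝ,
    ((∀ k ∈ Kbar.erase 0, 0 ≤ x k) ∧
      ∀ i : I, ∑ k ∈ Kbar.erase 0, (k i : ℝ) * x k = ρ i) ∧
    v = ∑ k ∈ Kbar.erase 0, x k}

open Topology

/-!
Write `b = -log a`. Then `L^(a)(x) = Σ_k x_k + E(x) / b` with `E(x) = Σ_k x_k (log (x_k c_k) - 1)`,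
which is bounded on bounded sets, so in the limit only the mass `Σ_k x_k` matters.

Lower bound: a nonnegative `x` whose loads `Σ_k k_i x_k` are close to `ρ` becomes feasible for (LP)
at small extra cost (add mass at the `e_i`, then thin binomially), so `L^(a)(x^{◦,a}) ≥ L* - o(1)`.

Upper bound: from a near-optimal `z` build `y` with exactly the loads of `x^{◦,a}`. By convexity,
`L^(a)(x^{◦,a}) - L^(a)(y)` is at most the gradient term. The gradient `log (x_k c_k / a)` is
`ξ_k + Σ_i k_i log (x_{e_i} / a)`; the second part is orthogonal to `y - x^{◦,a}` since the loads
agree, and `ξ_k → 0` follows from `χ → 0` by induction on `k`.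
-/

section

variable {I : Type*}

def load (K : Finset (I → ℕ)) (x : (I → ℕ) → ℝ) (i : I) : ℝ :=
  ∑ k ∈ K, (k i : ℝ) * x k

lemma le_load {K : Finset (I → ℕ)} {x : (I → ℕ) → ℝ} (hx : ∀ k ∈ K, 0 ≤ x k) {k : I → ℕ}
    (hk : k ∈ K) {i : I} (hi : k i ≠ 0) : x k ≤ load K x i :=
  calc x k ≤ k i * x k := le_mul_of_one_le_left (hx k hk) (mod_cast Nat.one_le_iff_ne_zero.2 hi)
    _ ≤ load K x i := single_le_sum (f := fun k => (k i : ℝ) * x k)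
      (fun k hk => mul_nonneg (Nat.cast_nonneg _) (hx k hk)) hk

lemma mem_Icc_of_load_le {K : Finset (I → ℕ)} (hK : 0 ∉ K) {x : (I → ℕ) → ℝ}
    (hx : ∀ k ∈ K, 0 ≤ x k) {B : ℝ} (hB : ∀ i, load K x i ≤ B) : ∀ k ∈ K, x k ∈ Set.Icc 0 B := by
  intro k hk
  obtain ⟨i, hi⟩ := Function.ne_iff.1 (ne_of_mem_of_not_mem hk hK)
  exact ⟨hx k hk, (le_load hx hk hi).trans (hB i)⟩

variable [Fintype I]

/-- The probability that `k` becomes `k'` when each of its type-`j` units is kept independently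
with probability `t j`. -/
noncomputable def thinKernel (t : I → ℝ) (k k' : I → ℕ) : ℝ :=
  ∏ j, (bernsteinPolynomial ℝ (k j) (k' j)).eval (t j)

section Thinning

variable {t : I → ℝ} {k k' : I → ℕ}

lemma thinKernel_nonneg (ht : ∀ j, t j ∈ Set.Icc (0 : ℝ) 1) (k k' : I → ℕ) :
    0 ≤ thinKernel t k k' := by
  refine prod_nonneg fun j _ => ?_
  have ht0 := (ht j).1
  have ht1 : 0 ≤ 1 - t j := sub_nonneg.2 (ht j).2
  simp only [bernsteinPolynomial, Polynomial.eval_mul, Polynomial.eval_pow, Polynomial.eval_sub,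
    Polynomial.eval_one, Polynomial.eval_X, Polynomial.eval_natCast]
  positivity

lemma thinKernel_eq_zero_of_not_le (h : ¬k' ≤ k) : thinKernel t k k' = 0 := by
  obtain ⟨j, hj⟩ : ∃ j, k j < k' j := by simpa [Pi.le_def] using h
  exact prod_eq_zero (mem_univ j)
    (by rw [bernsteinPolynomial.eq_zero_of_lt ℝ hj, Polynomial.eval_zero])

variable [DecidableEq I]

lemma sum_thinKernel (t : I → ℝ) (k : I → ℕ) :
    ∑ k' ∈ Fintype.piFinset (fun j => range (k j + 1)), thinKernel t k k' = 1 := by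
  simp only [thinKernel]
  rw [← prod_univ_sum (fun j => range (k j + 1))
    (fun j m => (bernsteinPolynomial ℝ (k j) m).eval (t j))]
  simp only [← Polynomial.eval_finsetSum, bernsteinPolynomial.sum, Polynomial.eval_one,
    prod_const_one]

lemma sum_mul_thinKernel (t : I → ℝ) (k : I → ℕ) (i : I) :
    ∑ k' ∈ Fintype.piFinset (fun j => range (k j + 1)), (k' i : ℝ) * thinKernel t k k' =
      k i * t i := by
  have hsplit : ∀ k' : I → ℕ, (k' i : ℝ) * thinKernel t k k' =
      ∏ j, (if j = i then (k' j : ℝ) else 1) * (bernsteinPolynomial ℝ (k j) (k' j)).eval (t j) := by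
    intro k'
    rw [prod_mul_distrib, prod_ite_eq' univ i, if_pos (mem_univ i), thinKernel]
  simp only [hsplit]
  rw [← prod_univ_sum (fun j => range (k j + 1))
    (fun j m => (if j = i then (m : ℝ) else 1) * (bernsteinPolynomial ℝ (k j) m).eval (t j))]
  rw [prod_eq_single i]
  · have := congrArg (Polynomial.eval (t i)) (bernsteinPolynomial.sum_smul ℝ (k i))
    simpa [Polynomial.eval_finsetSum] using this
  · intro j _ hji
    simp only [if_neg hji, one_mul, ← Polynomial.eval_finsetSum, bernsteinPolynomial.sum,
      Polynomial.eval_one]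
  · simp

lemma sum_mul_thinKernel_eq_sum_piFinset {Kbar : Finset (I → ℕ)}
    (hmono : ∀ k ∈ Kbar, ∀ k' : I → ℕ, (∀ i, k' i ≤ k i) → k' ∈ Kbar) (hk : k ∈ Kbar)
    (g : (I → ℕ) → ℝ) :
    ∑ k' ∈ Kbar, g k' * thinKernel t k k' =
      ∑ k' ∈ Fintype.piFinset (fun j => range (k j + 1)), g k' * thinKernel t k k' := by
  have hbox : ∀ k', k' ∈ Fintype.piFinset (fun j => range (k j + 1)) ↔ k' ≤ k := by
    simp [Fintype.mem_piFinset, Pi.le_def]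
  refine (sum_subset (fun k' hk' => hmono k hk k' ((hbox k').1 hk')) fun k' _ hk' => ?_).symm
  rw [thinKernel_eq_zero_of_not_le (mt (hbox k').2 hk'), mul_zero]

/-- Binomial thinning: keeping each type-`i` unit independently with probability
`τ i / load x i` does not increase the number of configurations and brings the loads down to `τ`. -/
theorem exists_load_eq_of_le {Kbar : Finset (I → ℕ)}
    (hmono : ∀ k ∈ Kbar, ∀ k' : I → ℕ, (∀ i, k' i ≤ k i) → k' ∈ Kbar)
    {x : (I → ℕ) → ℝ} (hx : ∀ k ∈ Kbar.erase 0, 0 ≤ x k) {τ : I → ℝ} (hτ0 : ∀ i, 0 ≤ τ i)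
    (hτ : ∀ i, τ i ≤ load (Kbar.erase 0) x i) :
    ∃ y : (I → ℕ) → ℝ, (∀ k ∈ Kbar.erase 0, 0 ≤ y k) ∧ (∀ i, load (Kbar.erase 0) y i = τ i) ∧
      ∑ k ∈ Kbar.erase 0, y k ≤ ∑ k ∈ Kbar.erase 0, x k := by
  set K := Kbar.erase 0
  set t : I → ℝ := fun i => τ i / load K x i
  have ht : ∀ i, t i ∈ Set.Icc (0 : ℝ) 1 := fun i =>
    ⟨div_nonneg (hτ0 i) ((hτ0 i).trans (hτ i)), div_le_one_of_le₀ (hτ i) ((hτ0 i).trans (hτ i))⟩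
  have ht_load : ∀ i, t i * load K x i = τ i := fun i =>
    div_mul_cancel_of_imp fun h => le_antisymm (h ▸ hτ i) (hτ0 i)
  set y : (I → ℕ) → ℝ := fun k' => ∑ k ∈ K, x k * thinKernel t k k'
  have hy : ∀ k', 0 ≤ y k' := fun k' =>
    sum_nonneg fun k hk => mul_nonneg (hx k hk) (thinKernel_nonneg ht k k')
  have hswap : ∀ g : (I → ℕ) → ℝ, ∑ k' ∈ Kbar, g k' * y k' =
      ∑ k ∈ K, x k * ∑ k' ∈ Fintype.piFinset (fun j => range (k j + 1)),
        g k' * thinKernel t k k' := by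
    intro g
    simp only [y, mul_sum]
    rw [sum_comm]
    refine sum_congr rfl fun k hk => ?_
    rw [← mul_sum, ← sum_mul_thinKernel_eq_sum_piFinset hmono (mem_of_mem_erase hk), mul_sum]
    exact sum_congr rfl fun k' _ => by ring
  refine ⟨y, fun k _ => hy k, fun i => ?_, ?_⟩
  · calc load K y i = ∑ k' ∈ Kbar, (k' i : ℝ) * y k' := sum_erase _ (by simp)
      _ = t i * load K x i := by
        simp only [hswap, sum_mul_thinKernel, load, mul_sum]
        exact sum_congr rfl fun k _ => by ring
      _ = τ i := ht_load i
  · calc ∑ k ∈ K, y k ≤ ∑ k' ∈ Kbar, 1 * y k' := by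
          simpa using sum_le_sum_of_subset_of_nonneg (erase_subset 0 Kbar) fun k _ _ => hy k
      _ = ∑ k ∈ K, x k := by
          rw [hswap]
          simp only [one_mul, sum_thinKernel, mul_one]

end Thinning

section LinearProgram

variable [DecidableEq I] {Kbar : Finset (I → ℕ)}

lemma single_mem_erase_zero (hunit : ∀ i : I, Pi.single i 1 ∈ Kbar) (i : I) :
    (Pi.single i 1 : I → ℕ) ∈ Kbar.erase 0 :=
  mem_erase.2 ⟨fun h => by simpa using congrFun h i, hunit i⟩

/-- Adding mass at the unit configurations `e_i` lifts the loads above `τ`; thinning then brings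
them down to `τ`. -/
theorem exists_load_eq (hunit : ∀ i : I, Pi.single i 1 ∈ Kbar)
    (hmono : ∀ k ∈ Kbar, ∀ k' : I → ℕ, (∀ i, k' i ≤ k i) → k' ∈ Kbar)
    {x : (I → ℕ) → ℝ} (hx : ∀ k ∈ Kbar.erase 0, 0 ≤ x k) {τ : I → ℝ} (hτ : ∀ i, 0 ≤ τ i) :
    ∃ y : (I → ℕ) → ℝ, (∀ k ∈ Kbar.erase 0, 0 ≤ y k) ∧ (∀ i, load (Kbar.erase 0) y i = τ i) ∧
      ∑ k ∈ Kbar.erase 0, y k ≤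
        ∑ k ∈ Kbar.erase 0, x k + ∑ i, max (τ i - load (Kbar.erase 0) x i) 0 := by
  set K := Kbar.erase 0
  set d : I → ℝ := fun i => max (τ i - load K x i) 0
  set x' : (I → ℕ) → ℝ := fun k => x k + ∑ i, if k = Pi.single i 1 then d i else 0
  have hsum : ∀ f : (I → ℕ) → ℝ,
      ∑ k ∈ K, f k * ∑ i, (if k = Pi.single i 1 then d i else 0) =
        ∑ i, f (Pi.single i 1) * d i := by
    intro f
    simp only [mul_sum, mul_ite, mul_zero]
    rw [sum_comm]
    exact sum_congr rfl fun i _ => by rw [sum_ite_eq' K, if_pos (single_mem_erase_zero hunit i)]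
  have hx' : ∀ k ∈ K, 0 ≤ x' k := fun k hk =>
    add_nonneg (hx k hk) (sum_nonneg fun i _ => by split_ifs <;> simp [d])
  have hload : ∀ i, load K x' i = load K x i + d i := by
    intro i
    simp only [load, x', mul_add, sum_add_distrib, hsum]
    simp [Pi.single_apply]
  obtain ⟨y, hy0, hyτ, hy⟩ := exists_load_eq_of_le hmono hx' hτ fun i => by
    rw [hload]
    linarith [le_max_left (τ i - load K x i) 0]
  refine ⟨y, hy0, hyτ, hy.trans_eq ?_⟩
  have hd := hsum fun _ => 1
  simp only [one_mul] at hd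
  show ∑ k ∈ K, (x k + _) = _
  rw [sum_add_distrib, hd]

lemma LPvalue_le (hunit : ∀ i : I, Pi.single i 1 ∈ Kbar)
    (hmono : ∀ k ∈ Kbar, ∀ k' : I → ℕ, (∀ i, k' i ≤ k i) → k' ∈ Kbar)
    {ρ : I → ℝ} (hρ : ∀ i, 0 ≤ ρ i) {x : (I → ℕ) → ℝ} (hx : ∀ k ∈ Kbar.erase 0, 0 ≤ x k) :
    LPvalue Kbar ρ ≤ ∑ k ∈ Kbar.erase 0, x k + ∑ i, max (ρ i - load (Kbar.erase 0) x i) 0 := by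
  obtain ⟨y, hy0, hyρ, hy⟩ := exists_load_eq hunit hmono hx hρ
  rw [LPvalue]
  refine (csInf_le ?_ ?_).trans hy
  · refine ⟨0, ?_⟩
    rintro v ⟨z, ⟨hz, -⟩, rfl⟩
    exact sum_nonneg hz
  · exact ⟨y, ⟨hy0, hyρ⟩, rfl⟩

lemma exists_feasible_sum_lt (hunit : ∀ i : I, Pi.single i 1 ∈ Kbar)
    (hmono : ∀ k ∈ Kbar, ∀ k' : I → ℕ, (∀ i, k' i ≤ k i) → k' ∈ Kbar)
    {ρ : I → ℝ} (hρ : ∀ i, 0 ≤ ρ i) {u : ℝ} (hu : LPvalue Kbar ρ < u) :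
    ∃ z : (I → ℕ) → ℝ, (∀ k ∈ Kbar.erase 0, 0 ≤ z k) ∧ (∀ i, load (Kbar.erase 0) z i = ρ i) ∧
      ∑ k ∈ Kbar.erase 0, z k < u := by
  obtain ⟨y, hy0, hyρ, -⟩ := exists_load_eq hunit hmono (x := 0) (fun _ _ => le_rfl) hρ
  unfold LPvalue at hu
  obtain ⟨v, ⟨z, ⟨hz0, hzρ⟩, rfl⟩, hv⟩ :=
    exists_lt_of_csInf_lt (by exact ⟨_, y, ⟨hy0, hyρ⟩, rfl⟩) hu
  exact ⟨z, hz0, hzρ, hv⟩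

end LinearProgram

section Entropy

noncomputable def entropy (K : Finset (I → ℕ)) (x : (I → ℕ) → ℝ) : ℝ :=
  ∑ k ∈ K, x k * (Real.log (x k * confC k) - 1)

lemma confC_pos (k : I → ℕ) : 0 < confC k :=
  prod_pos fun i _ => mod_cast (k i).factorial_pos

lemma mul_log_div_exp_mul {a c : ℝ} (ha : a ≠ 0) (hc : c ≠ 0) (u : ℝ) :
    u * Real.log (u * c / (Real.exp 1 * a)) = u * (Real.log (u * c) - 1) - u * Real.log a := by
  rcases eq_or_ne u 0 with rfl | hu
  · simp
  rw [Real.log_div (mul_ne_zero hu hc) (mul_ne_zero (Real.exp_ne_zero 1) ha),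
    Real.log_mul (Real.exp_ne_zero 1) ha, Real.log_exp]
  ring

lemma Lfun_eq [DecidableEq I] (Kbar : Finset (I → ℕ)) {a : ℝ} (ha : Real.log a ≠ 0)
    (x : (I → ℕ) → ℝ) :
    Lfun Kbar a x = ∑ k ∈ Kbar.erase 0, x k - entropy (Kbar.erase 0) x / Real.log a := by
  have ha0 : a ≠ 0 := by
    rintro rfl
    simp at ha
  simp only [Lfun, entropy, mul_log_div_exp_mul ha0 (confC_pos _).ne', sum_sub_distrib, ← sum_mul]
  field_simp
  ring

/-- Tangent-line bound for the convex function `u ↦ u (log (u c) - 1)`, i.e.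
`v log (u / v) ≤ u - v`. -/
lemma mul_log_mul_sub_one_add_le {c u v : ℝ} (hc : 0 < c) (hu : 0 < u) (hv : 0 ≤ v) :
    u * (Real.log (u * c) - 1) + Real.log (u * c) * (v - u) ≤ v * (Real.log (v * c) - 1) := by
  rcases hv.eq_or_lt with rfl | hv
  · simp
    linarith
  have key : v * Real.log (u / v) ≤ u - v := by
    have := mul_le_mul_of_nonneg_left (Real.log_le_sub_one_of_pos (div_pos hu hv)) hv.le
    rwa [mul_sub, mul_div_cancel₀ _ hv.ne', mul_one] at this
  rw [Real.log_div hu.ne' hv.ne'] at key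
  rw [Real.log_mul hu.ne' hc.ne', Real.log_mul hv.ne' hc.ne']
  linear_combination key

lemma entropy_add_le (K : Finset (I → ℕ)) {x y : (I → ℕ) → ℝ} (hx : ∀ k ∈ K, 0 < x k)
    (hy : ∀ k ∈ K, 0 ≤ y k) :
    entropy K x + ∑ k ∈ K, Real.log (x k * confC k) * (y k - x k) ≤ entropy K y := by
  rw [entropy, ← sum_add_distrib]
  exact sum_le_sum fun k hk => mul_log_mul_sub_one_add_le (confC_pos k) (hx k hk) (hy k hk)

lemma exists_abs_entropy_le (K : Finset (I → ℕ)) (B : ℝ) :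
    ∃ C, ∀ x : (I → ℕ) → ℝ, (∀ k ∈ K, x k ∈ Set.Icc 0 B) → |entropy K x| ≤ C := by
  have hbound : ∀ k : I → ℕ, ∃ C, ∀ u ∈ Set.Icc 0 B, ‖u * (Real.log (u * confC k) - 1)‖ ≤ C := by
    intro k
    have hc := (confC_pos k).ne'
    have hform : (fun u : ℝ => u * (Real.log (u * confC k) - 1)) =
        fun u => u * confC k * Real.log (u * confC k) / confC k - u := by
      funext u
      field_simp
    have hcont : Continuous fun u : ℝ => u * (Real.log (u * confC k) - 1) := by
      rw [hform]
      exact ((Real.continuous_mul_log.comp (continuous_mul_const _)).div_const _).sub continuous_id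
    exact isCompact_Icc.exists_bound_of_continuousOn hcont.continuousOn
  choose C hC using hbound
  exact ⟨∑ k ∈ K, C k, fun x hx =>
    (abs_sum_le_sum_abs _ _).trans (sum_le_sum fun k hk => hC k _ (hx k hk))⟩

end Entropy

section BalanceDefect

lemma xeDef_ne_zero {Kbar : Finset (I → ℕ)} {a : ℝ} {x : (I → ℕ) → ℝ} {m : I → ℕ} (ha : a ≠ 0)
    (hx : ∀ k ∈ Kbar.erase 0, x k ≠ 0) (hm : m ∈ Kbar) : xeDef a x m ≠ 0 := by
  unfold xeDef
  split_ifs with h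
  exacts [ha, hx m (mem_erase.2 ⟨h, hm⟩)]

variable [DecidableEq I]

/-- `ξ_k(x) = log (x_k c_k / a) - Σ_i k_i log (x_{e_i} / a)` with `x_0 = a`, written additively.
For positive `x` it vanishes for every `k` exactly when `x` has the product form
`x_k = a ∏_i (x_{e_i} / a)^{k_i} / c_k`. -/
noncomputable def balanceDefect (a : ℝ) (x : (I → ℕ) → ℝ) (k : I → ℕ) : ℝ :=
  Real.log (xeDef a x k * confC k) - Real.log a -
    ∑ i, (k i : ℝ) * (Real.log (xeDef a x (Pi.single i 1)) - Real.log a)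

lemma balanceDefect_zero (a : ℝ) (x : (I → ℕ) → ℝ) : balanceDefect a x 0 = 0 := by
  simp [balanceDefect, xeDef, confC]

lemma confC_add_single (m : I → ℕ) (i : I) :
    confC (m + Pi.single i 1) = (m i + 1) * confC m := by
  unfold confC
  rw [← mul_prod_erase univ _ (mem_univ i),
    ← mul_prod_erase univ (fun j => ((m j).factorial : ℝ)) (mem_univ i), ← mul_assoc]
  congr 1
  · simp [Nat.factorial_succ]
  · exact prod_congr rfl fun j hj => by simp [Pi.single_eq_of_ne (ne_of_mem_erase hj)]

lemma balanceDefect_add_single {a : ℝ} {x : (I → ℕ) → ℝ} {m : I → ℕ} {i : I} (ha : a ≠ 0)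
    (hm : xeDef a x m ≠ 0) (hk : xeDef a x (m + Pi.single i 1) ≠ 0)
    (he : xeDef a x (Pi.single i 1) ≠ 0) :
    balanceDefect a x (m + Pi.single i 1) =
      balanceDefect a x m - chiDef a x (m + Pi.single i 1) (Pi.single i 1) i := by
  have hmi : ((m + Pi.single i 1 : I → ℕ) i : ℝ) = m i + 1 := by simp
  have hsum : ∀ g : I → ℝ, ∑ j, ((m + Pi.single i 1 : I → ℕ) j : ℝ) * g j =
      ∑ j, (m j : ℝ) * g j + g i := by
    intro g
    simp [add_mul, sum_add_distrib, Pi.single_apply]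
  have hc := (confC_pos m).ne'
  have hmi0 : (m i : ℝ) + 1 ≠ 0 := by positivity
  simp only [balanceDefect, chiDef, hsum, add_tsub_cancel_right, tsub_self, confC_add_single,
    hmi, Pi.single_eq_same, Nat.cast_one, one_mul]
  rw [show xeDef a x 0 = a from if_pos rfl, Real.log_mul hk (mul_ne_zero hmi0 hc),
    Real.log_mul hmi0 hc, Real.log_mul hm hc, Real.log_mul hm he,
    Real.log_mul (mul_ne_zero hmi0 hk) ha, Real.log_mul hmi0 hk]
  ring

variable {Kbar : Finset (I → ℕ)}

/-- The recursion `ξ_{m+e_i} = ξ_m - χ_{m+e_i, e_i, i}` transports `χ → 0` from `ξ_0 = 0` up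
the downward closed set `K̄`. -/
theorem tendsto_balanceDefect (h0 : (0 : I → ℕ) ∈ Kbar) (hunit : ∀ i : I, Pi.single i 1 ∈ Kbar)
    (hmono : ∀ k ∈ Kbar, ∀ k' : I → ℕ, (∀ i, k' i ≤ k i) → k' ∈ Kbar)
    {a : ℕ → ℝ} {x : ℕ → (I → ℕ) → ℝ} (ha : ∀ᶠ n in atTop, a n ≠ 0)
    (hx : ∀ n, ∀ k ∈ Kbar.erase 0, x n k ≠ 0)
    (hchi : ∀ i : I, ∀ k k' : I → ℕ, isEdge Kbar k i → isEdge Kbar k' i →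
      Tendsto (fun n => chiDef (a n) (x n) k k' i) atTop (𝓝 0))
    {k : I → ℕ} (hk : k ∈ Kbar) :
    Tendsto (fun n => balanceDefect (a n) (x n) k) atTop (𝓝 0) := by
  induction k using WellFoundedLT.induction with
  | _ k ih =>
  rcases eq_or_ne k 0 with rfl | hk0
  · simpa only [balanceDefect_zero] using tendsto_const_nhds
  obtain ⟨i, hi⟩ := Function.ne_iff.1 hk0
  obtain ⟨m, rfl⟩ : ∃ m, k = m + Pi.single i 1 := ⟨k - Pi.single i 1, (tsub_add_cancel_of_le
    fun j => by by_cases h : j = i <;> simp_all [Nat.one_le_iff_ne_zero]).symm⟩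
  have hm : m ∈ Kbar := hmono _ hk m fun j => le_self_add
  have hlt : m < m + Pi.single i 1 := Pi.lt_def.2 ⟨le_self_add, i, by simp⟩
  have hedge_k : isEdge Kbar (m + Pi.single i 1) i :=
    ⟨mem_erase.2 ⟨hk0, hk⟩, by simp, by simpa using hm⟩
  have hedge_e : isEdge Kbar (Pi.single i 1) i :=
    ⟨single_mem_erase_zero hunit i, by simp, by simpa using h0⟩
  have hlim := (ih m hlt hm).sub (hchi i _ _ hedge_k hedge_e)
  rw [sub_zero] at hlim
  refine hlim.congr' ?_
  filter_upwards [ha] with n han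
  exact (balanceDefect_add_single han (xeDef_ne_zero han (hx n) hm)
    (xeDef_ne_zero han (hx n) hk) (xeDef_ne_zero han (hx n) (hunit i))).symm

end BalanceDefect

section Limit

variable [DecidableEq I] {Kbar : Finset (I → ℕ)}

lemma Lfun_le_of_load_eq {a : ℝ} (ha : Real.log a < 0) {x y : (I → ℕ) → ℝ}
    (hx : ∀ k ∈ Kbar.erase 0, 0 < x k) (hy : ∀ k ∈ Kbar.erase 0, 0 ≤ y k)
    (hload : ∀ i, load (Kbar.erase 0) x i = load (Kbar.erase 0) y i) :
    Lfun Kbar a x ≤ Lfun Kbar a y +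
      (∑ k ∈ Kbar.erase 0, balanceDefect a x k * (y k - x k)) / Real.log a := by
  set K := Kbar.erase 0
  set g : I → ℝ := fun i => Real.log (xeDef a x (Pi.single i 1)) - Real.log a
  have hlog : ∀ k ∈ K,
      Real.log (x k * confC k) = balanceDefect a x k + Real.log a + ∑ i, (k i : ℝ) * g i := by
    intro k hk
    simp only [balanceDefect, xeDef, if_neg (ne_of_mem_erase hk), g]
    ring
  have hlin : ∑ k ∈ K, (∑ i, (k i : ℝ) * g i) * (y k - x k) = 0 := by
    calc ∑ k ∈ K, (∑ i, (k i : ℝ) * g i) * (y k - x k)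
        = ∑ i, g i * (load K y i - load K x i) := by
          simp only [load, ← sum_sub_distrib, mul_sum, sum_mul]
          rw [sum_comm]
          exact sum_congr rfl fun i _ => sum_congr rfl fun k _ => by ring
      _ = 0 := by simp [hload]
  have hgrad : ∑ k ∈ K, Real.log (x k * confC k) * (y k - x k) =
      ∑ k ∈ K, balanceDefect a x k * (y k - x k) +
        Real.log a * (∑ k ∈ K, y k - ∑ k ∈ K, x k) := by
    calc ∑ k ∈ K, Real.log (x k * confC k) * (y k - x k)
        = ∑ k ∈ K, (balanceDefect a x k * (y k - x k) + Real.log a * (y k - x k) +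
            (∑ i, (k i : ℝ) * g i) * (y k - x k)) :=
          sum_congr rfl fun k hk => by rw [hlog k hk]; ring
      _ = _ := by rw [sum_add_distrib, sum_add_distrib, hlin, ← mul_sum, sum_sub_distrib, add_zero]
  have hconv := entropy_add_le K hx hy
  rw [hgrad] at hconv
  have key : (entropy K y - entropy K x - ∑ k ∈ K, balanceDefect a x k * (y k - x k)) /
      Real.log a ≤ ∑ k ∈ K, y k - ∑ k ∈ K, x k := by
    rw [div_le_iff_of_neg ha]
    linarith
  rw [Lfun_eq Kbar ha.ne, Lfun_eq Kbar ha.ne]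
  linarith [sub_div (entropy K y - entropy K x) (∑ k ∈ K, balanceDefect a x k * (y k - x k))
    (Real.log a), sub_div (entropy K y) (entropy K x) (Real.log a)]

lemma Lfun_le_of_feasible (hunit : ∀ i : I, Pi.single i 1 ∈ Kbar)
    (hmono : ∀ k ∈ Kbar, ∀ k' : I → ℕ, (∀ i, k' i ≤ k i) → k' ∈ Kbar)
    {a : ℝ} (ha : Real.log a < 0) {x : (I → ℕ) → ℝ} (hx : ∀ k ∈ Kbar.erase 0, 0 < x k)
    {B C : ℝ} (hB : ∀ i, load (Kbar.erase 0) x i ≤ B)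
    (hC : ∀ y : (I → ℕ) → ℝ, (∀ k ∈ Kbar.erase 0, y k ∈ Set.Icc 0 B) →
      |entropy (Kbar.erase 0) y| ≤ C)
    {ρ : I → ℝ} {z : (I → ℕ) → ℝ} (hz : ∀ k ∈ Kbar.erase 0, 0 ≤ z k)
    (hzρ : ∀ i, load (Kbar.erase 0) z i = ρ i) :
    Lfun Kbar a x ≤ ∑ k ∈ Kbar.erase 0, z k + ∑ i, max (load (Kbar.erase 0) x i - ρ i) 0 -
      (C + B * ∑ k ∈ Kbar.erase 0, |balanceDefect a x k|) / Real.log a := by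
  have hx0 : ∀ k ∈ Kbar.erase 0, 0 ≤ x k := fun k hk => (hx k hk).le
  obtain ⟨y, hy0, hyx, hy⟩ := exists_load_eq hunit hmono hz (τ := load (Kbar.erase 0) x) fun i =>
    sum_nonneg fun k hk => mul_nonneg (Nat.cast_nonneg _) (hx0 k hk)
  simp only [hzρ] at hy
  set K := Kbar.erase 0
  have hxB := mem_Icc_of_load_le (notMem_erase 0 Kbar) hx0 hB
  have hyB := mem_Icc_of_load_le (notMem_erase 0 Kbar) hy0 fun i => (hyx i).trans_le (hB i)
  set S := ∑ k ∈ K, balanceDefect a x k * (y k - x k)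
  have hS : |S| ≤ B * ∑ k ∈ K, |balanceDefect a x k| := by
    rw [mul_sum]
    refine (abs_sum_le_sum_abs _ _).trans (sum_le_sum fun k hk => ?_)
    rw [abs_mul, mul_comm B]
    exact mul_le_mul_of_nonneg_left (abs_sub_le_of_nonneg_of_le (hyB k hk).1 (hyB k hk).2
      (hxB k hk).1 (hxB k hk).2) (abs_nonneg _)
  have hE := hC y hyB
  have herr : (S - entropy K y) / Real.log a ≤
      -(C + B * ∑ k ∈ K, |balanceDefect a x k|) / Real.log a :=
    div_le_div_of_nonpos_of_le ha.le (by linarith [(abs_le.1 hS).1, (abs_le.1 hE).2])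
  calc Lfun Kbar a x ≤ Lfun Kbar a y + S / Real.log a :=
        Lfun_le_of_load_eq ha hx hy0 fun i => (hyx i).symm
    _ = ∑ k ∈ K, y k + (S - entropy K y) / Real.log a := by rw [Lfun_eq Kbar ha.ne]; ring
    _ ≤ _ := by rw [neg_div] at herr; linarith

lemma LPvalue_sub_le_Lfun (hunit : ∀ i : I, Pi.single i 1 ∈ Kbar)
    (hmono : ∀ k ∈ Kbar, ∀ k' : I → ℕ, (∀ i, k' i ≤ k i) → k' ∈ Kbar)
    {ρ : I → ℝ} (hρ : ∀ i, 0 ≤ ρ i) {a : ℝ} (ha : Real.log a < 0) {x : (I → ℕ) → ℝ}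
    (hx : ∀ k ∈ Kbar.erase 0, 0 ≤ x k) {B C : ℝ} (hB : ∀ i, load (Kbar.erase 0) x i ≤ B)
    (hC : ∀ y : (I → ℕ) → ℝ, (∀ k ∈ Kbar.erase 0, y k ∈ Set.Icc 0 B) →
      |entropy (Kbar.erase 0) y| ≤ C) :
    LPvalue Kbar ρ - ∑ i, max (ρ i - load (Kbar.erase 0) x i) 0 + C / Real.log a ≤
      Lfun Kbar a x := by
  have hE := hC x (mem_Icc_of_load_le (notMem_erase 0 Kbar) hx hB)
  have herr : C / Real.log a ≤ -entropy (Kbar.erase 0) x / Real.log a :=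
    div_le_div_of_nonpos_of_le ha.le (by linarith [(abs_le.1 hE).1])
  rw [neg_div] at herr
  rw [Lfun_eq Kbar ha.ne]
  linarith [LPvalue_le hunit hmono hρ hx]

theorem tendsto_Lfun_LPvalue (hunit : ∀ i : I, Pi.single i 1 ∈ Kbar)
    (hmono : ∀ k ∈ Kbar, ∀ k' : I → ℕ, (∀ i, k' i ≤ k i) → k' ∈ Kbar)
    {ρ : I → ℝ} (hρ : ∀ i, 0 ≤ ρ i) {a : ℕ → ℝ} {x : ℕ → (I → ℕ) → ℝ}
    (ha : Tendsto (fun n => Real.log (a n)) atTop atBot)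
    (hx : ∀ n, ∀ k ∈ Kbar.erase 0, 0 < x n k)
    (hload : ∀ i, Tendsto (fun n => load (Kbar.erase 0) (x n) i) atTop (𝓝 (ρ i)))
    (hξ : ∀ k ∈ Kbar.erase 0, Tendsto (fun n => balanceDefect (a n) (x n) k) atTop (𝓝 0)) :
    Tendsto (fun n => Lfun Kbar (a n) (x n)) atTop (𝓝 (LPvalue Kbar ρ)) := by
  set K := Kbar.erase 0
  set B := ∑ i, (ρ i + 1)
  obtain ⟨C, hC⟩ := exists_abs_entropy_le K B
  have hB : ∀ᶠ n in atTop, ∀ i, load K (x n) i ≤ B := eventually_all.2 fun i =>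
    ((hload i).eventually_lt_const (lt_add_one (ρ i))).mono fun n h => h.le.trans
      (single_le_sum (f := fun j => ρ j + 1) (fun j _ => by linarith [hρ j]) (mem_univ i))
  have hneg : ∀ᶠ n in atTop, Real.log (a n) < 0 := ha.eventually_lt_atBot 0
  have hdiv : ∀ {c : ℕ → ℝ} {c₀ : ℝ}, Tendsto c atTop (𝓝 c₀) →
      Tendsto (fun n => c n / Real.log (a n)) atTop (𝓝 0) := fun hc => by
    simpa [div_eq_mul_inv] using hc.mul ha.inv_tendsto_atBot
  have hdeficit : Tendsto (fun n => ∑ i, max (ρ i - load K (x n) i) 0) atTop (𝓝 0) := by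
    simpa using tendsto_finsetSum univ fun i _ =>
      ((tendsto_const_nhds (x := ρ i)).sub (hload i)).max (tendsto_const_nhds (x := (0 : ℝ)))
  have hexcess : Tendsto (fun n => ∑ i, max (load K (x n) i - ρ i) 0) atTop (𝓝 0) := by
    simpa using tendsto_finsetSum univ fun i _ =>
      ((hload i).sub (tendsto_const_nhds (x := ρ i))).max (tendsto_const_nhds (x := (0 : ℝ)))
  refine tendsto_order.2 ⟨fun l hl => ?_, fun u hu => ?_⟩
  · have hlow := (tendsto_const_nhds (x := LPvalue Kbar ρ)).sub hdeficit |>.add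
      (hdiv (tendsto_const_nhds (x := C)))
    rw [sub_zero, add_zero] at hlow
    filter_upwards [hlow.eventually_const_lt hl, hB, hneg] with n hln hBn hn
    exact hln.trans_le (LPvalue_sub_le_Lfun hunit hmono hρ hn (fun k hk => (hx n k hk).le) hBn hC)
  · obtain ⟨z, hz0, hzρ, hzu⟩ := exists_feasible_sum_lt hunit hmono hρ hu
    have hup := (tendsto_const_nhds (x := ∑ k ∈ K, z k)).add hexcess |>.sub
      (hdiv ((tendsto_const_nhds (x := C)).add
        ((tendsto_finsetSum K fun k hk => (hξ k hk).abs).const_mul B)))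
    rw [add_zero, sub_zero] at hup
    filter_upwards [hup.eventually_lt_const hzu, hB, hneg] with n hun hBn hn
    exact (Lfun_le_of_feasible hunit hmono hn (hx n) hBn hC hz0 hzρ).trans_lt hun

end Limit

end

theorem L_tendsto_LPvalue_general
    {I : Type*} [Fintype I] [DecidableEq I]
    (Kbar : Finset (I → ℕ))
    (h0 : (0 : I → ℕ) ∈ Kbar)
    (hunit : ∀ i : I, Pi.single i 1 ∈ Kbar)
    (hmono : ∀ k ∈ Kbar, ∀ k' : I → ℕ, (∀ i, k' i ≤ k i) → k' ∈ Kbar)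
    (ρ : I → ℝ) (hρ : ∀ i, 0 < ρ i)
    (p ε : ℝ) (hp : p ∈ Set.Ioo (0 : ℝ) 1) (hε : ε ∈ Set.Ioo (0 : ℝ) (1/2))
    (r : ℕ → ℝ) (hrtop : Tendsto r atTop atTop)
    (a : ℕ → ℝ) (ha : ∀ n, a n = r n ^ (p - 1))
    (xo : ℕ → (I → ℕ) → ℝ)
    (hpos : ∀ n, ∀ k ∈ Kbar.erase 0, 0 < xo n k)
    (hcons : ∀ᶠ n in atTop, ∀ i : I,
      |∑ k ∈ Kbar.erase 0, (k i : ℝ) * xo n k - ρ i| ≤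
        r n ^ (-(1 : ℝ)/2 + ε) / (Fintype.card I : ℝ))
    (hchi : ∀ i : I, ∀ k k' : I → ℕ, isEdge Kbar k i → isEdge Kbar k' i →
      Tendsto (fun n => chiDef (a n) (xo n) k k' i) atTop (nhds 0)) :
    Tendsto (fun n => Lfun Kbar (a n) (xo n)) atTop (nhds (LPvalue Kbar ρ)) := by
  have hr : ∀ᶠ n in atTop, 0 < r n := hrtop.eventually_gt_atTop 0
  have hloga : Tendsto (fun n => Real.log (a n)) atTop atBot := by
    refine ((Real.tendsto_log_atTop.comp hrtop).const_mul_atTop_of_neg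
      (sub_neg.2 hp.2)).congr' ?_
    filter_upwards [hr] with n hn
    rw [ha n, Real.log_rpow hn, Function.comp_apply]
  have ha0 : ∀ᶠ n in atTop, a n ≠ 0 := hr.mono fun n hn => by
    rw [ha n]
    exact (Real.rpow_pos_of_pos hn _).ne'
  have hη : Tendsto (fun n => r n ^ (-(1 : ℝ)/2 + ε) / (Fintype.card I : ℝ)) atTop (𝓝 0) := by
    have := ((tendsto_rpow_neg_atTop (sub_pos.2 hε.2)).comp hrtop).div_const (Fintype.card I : ℝ)
    simpa [neg_sub, sub_eq_neg_add, neg_div] using this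
  have hload : ∀ i, Tendsto (fun n => load (Kbar.erase 0) (xo n) i) atTop (𝓝 (ρ i)) := fun i =>
    tendsto_sub_nhds_zero_iff.1 (squeeze_zero_norm' (hcons.mono fun n h => h i) hη)
  exact tendsto_Lfun_LPvalue hunit hmono (fun i => (hρ i).le) hloga hpos hload fun k hk =>
    tendsto_balanceDefect h0 hunit hmono ha0 (fun n k hk => (hpos n k hk).ne') hchi
      (mem_of_mem_erase hk)

/-- Lemma `lem-close-to-opt`: along a sequence `r → ∞` with
`a = r^{p−1}`, if `x^{◦,a}` has positive coordinates, nearly satisfies the conservation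
laws, and `χ_{k,k',i}(x^{◦,a}) → 0` for every pair of edges, then
`L^(a)(x^{◦,a}) → L*`. -/
theorem L_tendsto_LPvalue
    {I : Type*} [Fintype I] [DecidableEq I] [Nonempty I]
    (Kbar : Finset (I → ℕ))
    (h0 : (0 : I → ℕ) ∈ Kbar)
    (hunit : ∀ i : I, Pi.single i 1 ∈ Kbar)
    (hmono : ∀ k ∈ Kbar, ∀ k' : I → ℕ, (∀ i, k' i ≤ k i) → k' ∈ Kbar)
    (ρ : I → ℝ) (hρ : ∀ i, 0 < ρ i)
    (p ε : ℝ) (hp : p ∈ Set.Ioo (0 : ℝ) 1) (hε : ε ∈ Set.Ioo (0 : ℝ) (1/2))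
    (r : ℕ → ℝ) (hr1 : ∀ n, 1 ≤ r n) (hrtop : Tendsto r atTop atTop)
    (a : ℕ → ℝ) (ha : ∀ n, a n = r n ^ (p - 1))
    (xo : ℕ → (I → ℕ) → ℝ)
    (hpos : ∀ n, ∀ k ∈ Kbar.erase 0, 0 < xo n k)
    (hcons : ∀ᶠ n in atTop, ∀ i : I,
      |∑ k ∈ Kbar.erase 0, (k i : ℝ) * xo n k - ρ i| ≤
        r n ^ (-(1 : ℝ)/2 + ε) / (Fintype.card I : ℝ))
    (hchi : ∀ i : I, ∀ k k' : I → ℕ, isEdge Kbar k i → isEdge Kbar k' i →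
      Tendsto (fun n => chiDef (a n) (xo n) k k' i) atTop (nhds 0)) :
    Tendsto (fun n => Lfun Kbar (a n) (xo n)) atTop (nhds (LPvalue Kbar ρ)) :=
  L_tendsto_LPvalue_general Kbar h0 hunit hmono ρ hρ p ε hp hε r hrtop a ha xo hpos hcons hchi
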